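/- arXiv:1907.03140 — 3 statements merged into one kernel-verified Lean document; each statement's English description precedes it below -/
import Mathlib

section
/- In the LP relaxation of the big-M ReLU formulation, the set of feasible x given pre-activation a satisfies a ≤ x ≤ U·(a - L)/(U - L), where z is relaxed to [0,1]. That is, for any z ∈ [0,1] with a = x - s, 0 ≤ x ≤ Uz, 0 ≤ s ≤ -L(1-z), we have a ≤ x ≤ U(a - L)/(U - L). -/
theorem lp_relaxation_relu_bounds (L U a x s z : ℝ)
    (hL : L < 0) (hU : 0 < U)
    (hz0 : 0 ≤ z) (hz1 : z ≤ 1)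
    (ha : a = x - s)
    (hx0 : 0 ≤ x) (hxU : x ≤ U * z)
    (hs0 : 0 ≤ s) (hsL : s ≤ -L * (1 - z)) :
    a ≤ x ∧ x ≤ U * (a - L) / (U - L) := by
  refine ⟨by linarith, ?_⟩
  rw [le_div_iff₀ (by linarith : (0:ℝ) < U - L)]
  nlinarith [mul_nonneg hU.le hs0, mul_le_mul_of_nonneg_left hsL hU.le,
    mul_le_mul_of_nonpos_left (by linarith : x - U ≤ U * (z - 1)) hL.le]
end

section
/- The upper bound U(a - L)/(U - L) on the ReLU relaxation is monotone: if U' ≤ U and L ≤ L' (with L' < 0 < U', L < 0 < U and a ∈ [L', U']), then U'(a - L')/(U' - L') ≤ U(a - L)/(U - L). -/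
theorem relu_relaxation_upper_bound_monotone (L U L' U' a : ℝ)
    (hL : L < 0) (hU : 0 < U) (hL' : L' < 0) (hU' : 0 < U')
    (hUU : U' ≤ U) (hLL : L ≤ L')
    (haL : L' ≤ a) (haU : a ≤ U') :
    U' * (a - L') / (U' - L') ≤ U * (a - L) / (U - L) := by
  have h1 : (0:ℝ) < U' - L' := by linarith
  have h2 : (0:ℝ) < U - L := by linarith
  rw [div_le_div_iff₀ h1 h2]
  nlinarith [mul_nonneg (sub_nonneg.2 hLL) (mul_nonneg hU'.le (sub_nonneg.2 haU)),
    mul_nonneg (sub_nonneg.2 hLL) (mul_nonneg (sub_nonneg.2 hUU) h1.le),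
    mul_nonneg (sub_nonneg.2 hUU) (mul_nonneg (neg_nonneg.2 hL'.le) (sub_nonneg.2 haL))]
end

section
/- A single-layer exact formulation: given the MILP constraints Wx⁰ + b = x¹ - s¹, x¹, s¹ ≥ 0, x¹ⱼ ≤ Uⱼ zⱼ, s¹ⱼ ≤ -Lⱼ(1 - zⱼ), zⱼ ∈ {0,1}, where Lⱼ ≤ (Wx⁰+b)ⱼ ≤ Uⱼ for all feasible x⁰, every feasible point satisfies x¹ = σ(Wx⁰ + b). -/
theorem single_layer_bigM_exact (n0 n1 : ℕ)
    (W : Matrix (Fin n1) (Fin n0) ℝ) (b : Fin n1 → ℝ)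
    (L U : Fin n1 → ℝ) (x0 : Fin n0 → ℝ) (x1 s1 : Fin n1 → ℝ) (z : Fin n1 → ℝ)
    (hLU : ∀ j, L j < 0 ∧ 0 < U j)
    (hbounds : ∀ j, L j ≤ W.mulVec x0 j + b j ∧ W.mulVec x0 j + b j ≤ U j)
    (hlin : ∀ j, W.mulVec x0 j + b j = x1 j - s1 j)
    (hx1 : ∀ j, 0 ≤ x1 j) (hs1 : ∀ j, 0 ≤ s1 j)
    (hbigMx : ∀ j, x1 j ≤ U j * z j)
    (hbigMs : ∀ j, s1 j ≤ -L j * (1 - z j))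
    (hz : ∀ j, z j = 0 ∨ z j = 1) :
    ∀ j, x1 j = max 0 (W.mulVec x0 j + b j) := by
  intro j
  have hl := hlin j
  rcases hz j with h0 | h1
  · have hx0 : x1 j = 0 := le_antisymm (by have := hbigMx j; rw [h0] at this; linarith) (hx1 j)
    have : W.mulVec x0 j + b j ≤ 0 := by rw [hl, hx0]; linarith [hs1 j]
    rw [hx0, max_eq_left this]
  · have hs0 : s1 j = 0 := le_antisymm (by have := hbigMs j; rw [h1] at this; linarith) (hs1 j)
    have hpos : 0 ≤ W.mulVec x0 j + b j := by rw [hl, hs0]; linarith [hx1 j]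
    rw [max_eq_right hpos]; rw [hl, hs0]; ring
end
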